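/- For any polynomial P of degree at most r in the variable ζ = x^n / y^m, one has H_1 (x^𝒩 y^ℳ P(ζ)) = x^𝒩 y^ℳ · (H_{1,red} P)(ζ), where the reduced operator is H_{1,red} = ζ^{−1} Π_{l=1}^N Π_{j=0}^{n_l−1} (𝒩_l − j + n_l ζ∂_ζ) + ζ Π_{k=1}^M Π_{i=0}^{m_k−1} (ℳ_k − i − m_k ζ∂_ζ). -/

import Mathlib

open MvPolynomial

noncomputable def Dxn {N M : ℕ} (n : Fin N → ℕ) :
    Module.End ℝ (MvPolynomial (Fin N ⊕ Fin M) ℝ) :=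
  (List.ofFn fun l : Fin N =>
    ((pderiv (Sum.inl l)).toLinearMap : Module.End ℝ (MvPolynomial (Fin N ⊕ Fin M) ℝ)) ^ n l).prod

noncomputable def Dym {N M : ℕ} (m : Fin M → ℕ) :
    Module.End ℝ (MvPolynomial (Fin N ⊕ Fin M) ℝ) :=
  (List.ofFn fun k : Fin M =>
    ((pderiv (Sum.inr k)).toLinearMap : Module.End ℝ (MvPolynomial (Fin N ⊕ Fin M) ℝ)) ^ m k).prod

/-- `H₁ = y^m ∂_x^n + x^n ∂_y^m`. -/
noncomputable def H1 {N M : ℕ} (n : Fin N → ℕ) (m : Fin M → ℕ) :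
    Module.End ℝ (MvPolynomial (Fin N ⊕ Fin M) ℝ) :=
  (LinearMap.mulLeft ℝ (∏ k : Fin M, X (Sum.inr k) ^ m k)).comp (Dxn n) +
    (LinearMap.mulLeft ℝ (∏ l : Fin N, X (Sum.inl l) ^ n l)).comp (Dym m)

/-- The monomial `x^i y^j`. -/
noncomputable def mon {N M : ℕ} (i : Fin N → ℕ) (j : Fin M → ℕ) :
    MvPolynomial (Fin N ⊕ Fin M) ℝ :=
  monomial (Finsupp.equivFunOnFinite.symm (Sum.elim i j)) 1

/-- The expansion map sending a one-variable polynomial `P(ζ) = Σ_s c_s ζ^s` of degree at most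
`r` to `x^𝒩 y^ℳ P(ζ)` with `ζ = x^n / y^m`, i.e. to `Σ_s c_s x^{𝒩 + s n} y^{ℳ - s m}`. -/
noncomputable def expand {N M : ℕ} (n : Fin N → ℕ) (m : Fin M → ℕ) (𝒩 : Fin N → ℕ)
    (ℳ : Fin M → ℕ) (r : ℕ) (P : Polynomial ℝ) : MvPolynomial (Fin N ⊕ Fin M) ℝ :=
  ∑ s ∈ Finset.range (r + 1),
    P.coeff s • mon (fun l => 𝒩 l + s * n l) fun k => ℳ k - s * m k

/-- The Euler operator `ζ∂_ζ` on one-variable polynomials. -/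
noncomputable def euler : Module.End ℝ (Polynomial ℝ) :=
  (LinearMap.mulLeft ℝ (Polynomial.X : Polynomial ℝ)).comp Polynomial.derivative

/-- The reduced Hamiltonian
`H₁,red = ζ⁻¹ Π_l Π_{j<n_l} (𝒩_l - j + n_l ζ∂_ζ) + ζ Π_k Π_{i<m_k} (ℳ_k - i - m_k ζ∂_ζ)`
(the `ζ⁻¹` being implemented by `Polynomial.divX`). -/
noncomputable def H1red {N M : ℕ} (n : Fin N → ℕ) (m : Fin M → ℕ) (𝒩 : Fin N → ℕ)
    (ℳ : Fin M → ℕ) (P : Polynomial ℝ) : Polynomial ℝ :=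
  Polynomial.divX
    ((Polynomial.aeval euler
      (∏ l : Fin N, ∏ j ∈ Finset.range (n l),
        ((n l : ℝ) • Polynomial.X + Polynomial.C ((𝒩 l : ℝ) - j)))) P) +
  Polynomial.X *
    ((Polynomial.aeval euler
      (∏ k : Fin M, ∏ i ∈ Finset.range (m k),
        (Polynomial.C ((ℳ k : ℝ) - i) - (m k : ℝ) • Polynomial.X))) P)

/-!
Both sides are linear in `P`, so it suffices to take `P = ζ^s` with `s ≤ r`. The operators
`y^m ∂_x^n` and `x^n ∂_y^m` send `x^𝒩 y^ℳ ζ^s` to `x^𝒩 y^ℳ ζ^{s-1}` and `x^𝒩 y^ℳ ζ^{s+1}` times the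
falling factorials `∏_l (𝒩_l + s n_l)^{\underline{n_l}}` and `∏_k (ℳ_k - s m_k)^{\underline{m_k}}`.
Since `ζ^s` is an eigenvector of `ζ∂_ζ` with eigenvalue `s`, the two factorised polynomials in
`ζ∂_ζ` act on it by exactly these falling factorials. The shifts out of the range `0 ≤ s ≤ r`
carry the weights `∏_l 𝒩_l^{\underline{n_l}} = 0` (some `𝒩_l < n_l`) and
`∏_k (ℳ_k - r m_k)^{\underline{m_k}} = 0` (by the choice of `r`).
-/

section pderiv

variable {R σ : Type*} [CommSemiring R]

theorem MvPolynomial.pderiv_pow_monomial (v : σ) (t : ℕ) (s : σ →₀ ℕ) (a : R) :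
    (((pderiv v).toLinearMap : Module.End R (MvPolynomial σ R)) ^ t) (monomial s a) =
      monomial (s - Finsupp.single v t) (a * (s v).descFactorial t) := by
  induction t generalizing s a with
  | zero => simp
  | succ t ih =>
    rw [pow_succ', Module.End.mul_apply, ih]
    simp only [Derivation.coeFn_coe, pderiv_monomial, tsub_tsub, ← Finsupp.single_add,
      Finsupp.tsub_apply, Finsupp.single_eq_same, Nat.descFactorial_succ, Nat.cast_mul]
    ring_nf

theorem MvPolynomial.prod_ofFn_pderiv_pow_monomial {N : ℕ} (f : Fin N → σ)
    (hf : f.Injective) (t : Fin N → ℕ) (s : σ →₀ ℕ) (a : R) :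
    (List.ofFn fun l => ((pderiv (f l)).toLinearMap : Module.End R (MvPolynomial σ R)) ^ t l).prod
        (monomial s a) =
      monomial (s - ∑ l, Finsupp.single (f l) (t l)) (a * ∏ l, (s (f l)).descFactorial (t l)) := by
  induction N with
  | zero => simp
  | succ N ih =>
    have hfresh : (∑ l : Fin N, Finsupp.single (f l.succ) (t l.succ)) (f 0) = 0 := by
      simp [fun l : Fin N => hf.ne (Fin.succ_ne_zero l)]
    rw [List.ofFn_succ, List.prod_cons, Module.End.mul_apply,
      ih (fun l => f l.succ) (hf.comp (Fin.succ_injective N)), pderiv_pow_monomial,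
      Finsupp.tsub_apply, hfresh, tsub_zero, tsub_tsub, Fin.sum_univ_succ, Fin.prod_univ_succ,
      add_comm (Finsupp.single _ _)]
    push_cast
    ring_nf

end pderiv

theorem Polynomial.divX_smul {R : Type*} [Semiring R] (a : R) (P : Polynomial R) :
    (a • P).divX = a • P.divX := by
  ext; simp

theorem Nat.cast_descFactorial_eq_prod_range {R : Type*} [CommRing R] (a t : ℕ) :
    (a.descFactorial t : R) = ∏ j ∈ Finset.range t, ((a : R) - j) := by
  rw [← descPochhammer_eval_eq_descFactorial, descPochhammer_eval_eq_prod_range]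

def multiDescFactorial {ι : Type*} [Fintype ι] (i t : ι → ℕ) : ℕ :=
  ∏ l, (i l).descFactorial (t l)

theorem multiDescFactorial_eq_zero_iff {ι : Type*} [Fintype ι] (i t : ι → ℕ) :
    multiDescFactorial i t = 0 ↔ ∃ l, i l < t l := by
  simp [multiDescFactorial, Finset.prod_eq_zero_iff, Nat.descFactorial_eq_zero_iff_lt]

section monomials

variable {N M : ℕ}

theorem mon_mul_mon (i i' : Fin N → ℕ) (j j' : Fin M → ℕ) :
    mon i j * mon i' j' = mon (i + i') (j + j') := by
  rw [mon, mon, mon, monomial_mul, one_mul]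
  congr 2
  ext (x | x) <;> rfl

theorem prod_X_inl_pow (n : Fin N → ℕ) :
    (∏ l : Fin N, X (Sum.inl l) ^ n l : MvPolynomial (Fin N ⊕ Fin M) ℝ) = mon n 0 := by
  simp only [X_pow_eq_monomial, ← monomial_sum_one, mon]
  congr 2
  ext (x | x) <;> simp [Finsupp.single_apply]

theorem prod_X_inr_pow (m : Fin M → ℕ) :
    (∏ k : Fin M, X (Sum.inr k) ^ m k : MvPolynomial (Fin N ⊕ Fin M) ℝ) = mon 0 m := by
  simp only [X_pow_eq_monomial, ← monomial_sum_one, mon]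
  congr 2
  ext (x | x) <;> simp [Finsupp.single_apply]

theorem Dxn_mon (n i : Fin N → ℕ) (j : Fin M → ℕ) :
    Dxn n (mon i j) = (multiDescFactorial i n : ℝ) • mon (i - n) j := by
  rw [Dxn, mon, prod_ofFn_pderiv_pow_monomial _ Sum.inl_injective, mon, smul_monomial]
  congr 1
  · congr 2
    ext (x | x) <;> simp [Finsupp.single_apply]
  · simp [multiDescFactorial]

theorem Dym_mon (m : Fin M → ℕ) (i : Fin N → ℕ) (j : Fin M → ℕ) :
    Dym m (mon i j) = (multiDescFactorial j m : ℝ) • mon i (j - m) := by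
  rw [Dym, mon, prod_ofFn_pderiv_pow_monomial _ Sum.inr_injective, mon, smul_monomial]
  congr 1
  · congr 2
    ext (x | x) <;> simp [Finsupp.single_apply]
  · simp [multiDescFactorial]

theorem H1_mon (n i : Fin N → ℕ) (m j : Fin M → ℕ) :
    H1 n m (mon i j) = (multiDescFactorial i n : ℝ) • mon (i - n) (j + m) +
      (multiDescFactorial j m : ℝ) • mon (i + n) (j - m) := by
  rw [H1, LinearMap.add_apply, LinearMap.comp_apply, LinearMap.comp_apply,
    LinearMap.mulLeft_apply, LinearMap.mulLeft_apply, Dxn_mon, Dym_mon, prod_X_inl_pow,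
    prod_X_inr_pow, mul_smul_comm, mul_smul_comm, mon_mul_mon, mon_mul_mon, zero_add, zero_add,
    add_comm m, add_comm n]

end monomials

section reduction

variable {N M : ℕ} (n : Fin N → ℕ) (m : Fin M → ℕ) (𝒩 : Fin N → ℕ) (ℳ : Fin M → ℕ)

/-- `x^𝒩 y^ℳ ζ^s` with `ζ = x^n / y^m`. -/
noncomputable def monZeta (s : ℕ) : MvPolynomial (Fin N ⊕ Fin M) ℝ :=
  mon (𝒩 + s • n) (ℳ - s • m)

theorem expand_add (r : ℕ) (P Q : Polynomial ℝ) :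
    expand n m 𝒩 ℳ r (P + Q) = expand n m 𝒩 ℳ r P + expand n m 𝒩 ℳ r Q := by
  simp only [_root_.expand, Polynomial.coeff_add, add_smul, Finset.sum_add_distrib]

theorem expand_smul (r : ℕ) (a : ℝ) (P : Polynomial ℝ) :
    expand n m 𝒩 ℳ r (a • P) = a • expand n m 𝒩 ℳ r P := by
  simp only [_root_.expand, Polynomial.coeff_smul, smul_eq_mul, Finset.smul_sum, smul_smul]

theorem expand_X_pow (r t : ℕ) :
    expand n m 𝒩 ℳ r (Polynomial.X ^ t) = if t ≤ r then monZeta n m 𝒩 ℳ t else 0 := by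
  simp [_root_.expand, Polynomial.coeff_X_pow]
  rfl

theorem H1red_add (P Q : Polynomial ℝ) :
    H1red n m 𝒩 ℳ (P + Q) = H1red n m 𝒩 ℳ P + H1red n m 𝒩 ℳ Q := by
  simp only [H1red, map_add, Polynomial.divX_add, mul_add]
  abel

theorem H1red_smul (a : ℝ) (P : Polynomial ℝ) :
    H1red n m 𝒩 ℳ (a • P) = a • H1red n m 𝒩 ℳ P := by
  simp only [H1red, map_smul, Polynomial.divX_smul, mul_smul_comm, smul_add]

theorem euler_X_pow (s : ℕ) : euler (Polynomial.X ^ s) = (s : ℝ) • Polynomial.X ^ s := by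
  rcases s with _ | s
  · simp [euler]
  · simp only [euler, LinearMap.comp_apply, Polynomial.derivative_X_pow, LinearMap.mulLeft_apply,
      Polynomial.smul_eq_C_mul, Nat.add_sub_cancel]
    ring

theorem aeval_euler_X_pow (q : Polynomial ℝ) (s : ℕ) :
    Polynomial.aeval euler q (Polynomial.X ^ s) = q.eval (s : ℝ) • Polynomial.X ^ s :=
  Module.End.aeval_apply_of_mem_apply_eq_smul (euler_X_pow s)

theorem eval_prod_lowering (s : ℕ) :
    (∏ l : Fin N, ∏ j ∈ Finset.range (n l),
        ((n l : ℝ) • Polynomial.X + Polynomial.C ((𝒩 l : ℝ) - j))).eval (s : ℝ) =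
      (multiDescFactorial (𝒩 + s • n) n : ℝ) := by
  simp only [multiDescFactorial, Nat.cast_prod, Nat.cast_descFactorial_eq_prod_range,
    Polynomial.eval_prod, Polynomial.eval_add, Polynomial.eval_smul, Polynomial.eval_X,
    Polynomial.eval_C, Pi.add_apply, Pi.smul_apply, smul_eq_mul, Nat.cast_add, Nat.cast_mul]
  refine Finset.prod_congr rfl fun l _ => Finset.prod_congr rfl fun j _ => ?_
  ring

theorem eval_prod_raising {s : ℕ} (hs : ∀ k, s * m k ≤ ℳ k) :
    (∏ k : Fin M, ∏ i ∈ Finset.range (m k),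
        (Polynomial.C ((ℳ k : ℝ) - i) - (m k : ℝ) • Polynomial.X)).eval (s : ℝ) =
      (multiDescFactorial (ℳ - s • m) m : ℝ) := by
  simp only [multiDescFactorial, Nat.cast_prod, Nat.cast_descFactorial_eq_prod_range,
    Polynomial.eval_prod, Polynomial.eval_sub, Polynomial.eval_smul, Polynomial.eval_X,
    Polynomial.eval_C, Pi.sub_apply, Pi.smul_apply, smul_eq_mul]
  refine Finset.prod_congr rfl fun k _ => Finset.prod_congr rfl fun i _ => ?_
  rw [Nat.cast_sub (hs k), Nat.cast_mul]
  ring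

theorem H1red_X_pow {s : ℕ} (hs : ∀ k, s * m k ≤ ℳ k) :
    H1red n m 𝒩 ℳ (Polynomial.X ^ s) =
      (multiDescFactorial (𝒩 + s • n) n : ℝ) • (Polynomial.X ^ s).divX +
        (multiDescFactorial (ℳ - s • m) m : ℝ) • Polynomial.X ^ (s + 1) := by
  rw [H1red, aeval_euler_X_pow, aeval_euler_X_pow, eval_prod_lowering, eval_prod_raising _ _ hs,
    Polynomial.divX_smul, mul_smul_comm, pow_succ']

theorem H1_monZeta (s : ℕ) :
    H1 n m (monZeta n m 𝒩 ℳ s) =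
      (multiDescFactorial (𝒩 + s • n) n : ℝ) • mon (𝒩 + s • n - n) (ℳ - s • m + m) +
        (multiDescFactorial (ℳ - s • m) m : ℝ) • monZeta n m 𝒩 ℳ (s + 1) := by
  rw [monZeta, H1_mon, monZeta, succ_nsmul, succ_nsmul, add_assoc, tsub_tsub]

theorem mon_sub_add_eq_monZeta {t : ℕ} (ht : ∀ k, (t + 1) * m k ≤ ℳ k) :
    mon (𝒩 + (t + 1) • n - n) (ℳ - (t + 1) • m + m) = monZeta n m 𝒩 ℳ t := by
  rw [monZeta]
  congr 1 <;> ext i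
  · simp only [Pi.add_apply, Pi.sub_apply, Pi.smul_apply, smul_eq_mul, add_mul]
    omega
  · have := ht i
    simp only [Pi.add_apply, Pi.sub_apply, Pi.smul_apply, smul_eq_mul, add_mul] at this ⊢
    omega

theorem H1_expand_X_pow {r s : ℕ} (h𝒩 : ∃ l, 𝒩 l < n l) (hr : ∀ k, r * m k ≤ ℳ k)
    (hr' : ∃ k, ℳ k < (r + 1) * m k) (hs : s ≤ r) :
    H1 n m (expand n m 𝒩 ℳ r (Polynomial.X ^ s)) =
      expand n m 𝒩 ℳ r (H1red n m 𝒩 ℳ (Polynomial.X ^ s)) := by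
  have hsm : ∀ k, s * m k ≤ ℳ k := fun k => (Nat.mul_le_mul_right _ hs).trans (hr k)
  rw [expand_X_pow, if_pos hs, H1_monZeta, H1red_X_pow _ _ _ _ hsm, expand_add, expand_smul,
    expand_smul]
  congr 1
  · rcases s with _ | t
    · simp [(multiDescFactorial_eq_zero_iff 𝒩 n).2 h𝒩]
    · rw [mon_sub_add_eq_monZeta _ _ _ _ hsm, Polynomial.divX_X_pow, if_neg t.succ_ne_zero,
        Nat.add_sub_cancel, expand_X_pow, if_pos (by omega)]
  · rcases hs.lt_or_eq with hs | rfl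
    · rw [expand_X_pow, if_pos (Nat.succ_le_of_lt hs)]
    · have hzero : multiDescFactorial (ℳ - s • m) m = 0 := by
        obtain ⟨k, hk⟩ := hr'
        refine (multiDescFactorial_eq_zero_iff _ _).2 ⟨k, ?_⟩
        have := hr k
        simp only [Pi.sub_apply, Pi.smul_apply, smul_eq_mul]
        rw [add_mul] at hk
        omega
      rw [hzero, Nat.cast_zero, zero_smul, zero_smul]

theorem H1_expand_eq_expand_H1red {r : ℕ} (h𝒩 : ∃ l, 𝒩 l < n l) (hr : ∀ k, r * m k ≤ ℳ k)
    (hr' : ∃ k, ℳ k < (r + 1) * m k) {P : Polynomial ℝ} (hP : P ∈ Polynomial.degreeLE ℝ r) :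
    H1 n m (expand n m 𝒩 ℳ r P) = expand n m 𝒩 ℳ r (H1red n m 𝒩 ℳ P) := by
  rw [Polynomial.degreeLE_eq_span_X_pow] at hP
  induction hP using Submodule.span_induction with
  | mem P hP =>
    obtain ⟨s, hs, rfl⟩ := by simpa using hP
    exact H1_expand_X_pow n m 𝒩 ℳ h𝒩 hr hr' hs
  | zero => simp [_root_.expand, H1red]
  | add P Q _ _ hP hQ => rw [expand_add, map_add, hP, hQ, H1red_add, expand_add]
  | smul a P _ hP => rw [expand_smul, map_smul, hP, H1red_smul, expand_smul]

end reduction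

theorem H1_reduction_general {N M : ℕ} (hM : 1 ≤ M)
    (n : Fin N → ℕ) (m : Fin M → ℕ) (hm : ∀ k, 0 < m k)
    (𝒩 : Fin N → ℕ) (ℳ : Fin M → ℕ) (hrestr : ∃ l', 𝒩 l' < n l')
    (r : ℕ) (hr : r = Finset.univ.inf' ⟨⟨0, hM⟩, Finset.mem_univ _⟩ fun k => ℳ k / m k)
    (P : Polynomial ℝ) (hP : P ∈ Polynomial.degreeLE ℝ (r : ℕ)) :
    H1 n m (expand n m 𝒩 ℳ r P) = expand n m 𝒩 ℳ r (H1red n m 𝒩 ℳ P) := by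
  have hr_le : ∀ k, r * m k ≤ ℳ k := fun k =>
    calc r * m k ≤ ℳ k / m k * m k :=
          Nat.mul_le_mul_right _ (hr ▸ Finset.inf'_le _ (Finset.mem_univ k))
      _ ≤ ℳ k := Nat.div_mul_le_self _ _
  have hr_lt : ∃ k, ℳ k < (r + 1) * m k := by
    obtain ⟨k, -, hk⟩ :=
      Finset.exists_mem_eq_inf' ⟨⟨0, hM⟩, Finset.mem_univ _⟩ fun k => ℳ k / m k
    exact ⟨k, hr.trans hk ▸ (Nat.div_lt_iff_lt_mul (hm k)).mp (Nat.lt_succ_self _)⟩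
  exact H1_expand_eq_expand_H1red n m 𝒩 ℳ hrestr hr_le hr_lt hP

/-- for any polynomial `P` of degree at most `r` in `ζ = x^n / y^m`,
`H₁ (x^𝒩 y^ℳ P(ζ)) = x^𝒩 y^ℳ (H₁,red P)(ζ)`. -/
theorem H1_reduction {N M : ℕ} (hN : 1 ≤ N) (hM : 1 ≤ M)
    (n : Fin N → ℕ) (m : Fin M → ℕ) (hn : ∀ l, 0 < n l) (hm : ∀ k, 0 < m k)
    (𝒩 : Fin N → ℕ) (ℳ : Fin M → ℕ) (hrestr : ∃ l', 𝒩 l' < n l')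
    (r : ℕ) (hr : r = Finset.univ.inf' ⟨⟨0, hM⟩, Finset.mem_univ _⟩ fun k => ℳ k / m k)
    (P : Polynomial ℝ) (hP : P ∈ Polynomial.degreeLE ℝ (r : ℕ)) :
    H1 n m (expand n m 𝒩 ℳ r P) = expand n m 𝒩 ℳ r (H1red n m 𝒩 ℳ P) :=
  H1_reduction_general hM n m hm 𝒩 ℳ hrestr r hr P hP
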